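/- Under the Case-C1 setup, the removal of the pair {v_2, v_3} disconnects d_2 from both sources; that is, every path from s_1 to d_2 and every path from s_2 to d_2 contains v_2 or v_3. -/

import Mathlib

open List

/-- `IsPath E p u w` : the nonempty list `p` of vertices is a directed path
from `u` to `w` with respect to the edge relation `E`. -/
def IsPath {V : Type*} (E : V → V → Prop) (p : List V) (u w : V) : Prop :=
  p ≠ [] ∧ p.head? = some u ∧ p.getLast? = some w ∧ p.Chain' E

/-- `Reaches E u w` (written `u ~> w`) : there is a directed path from `u` to `w`. -/
def Reaches {V : Type*} (E : V → V → Prop) (u w : V) : Prop :=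
  ∃ p, IsPath E p u w

/-- A two-unicast layered network: a finite directed graph, with two sources
`s1, s2` and two destinations `d1, d2` (all four distinct), vertices partitioned
into layers `1, ..., r` such that every edge goes from a layer to the next one,
the first layer is `{s1, s2}`, the last layer is `{d1, d2}`, and each source
reaches its corresponding destination. -/
structure TwoUnicastNetwork (V : Type*) [Fintype V] where
  E : V → V → Prop
  s1 : V
  s2 : V
  d1 : V
  d2 : V
  r : ℕ
  layer : V → ℕ
  layer_pos : ∀ v, 1 ≤ layer v
  layer_le : ∀ v, layer v ≤ r
  edge_layer : ∀ u w, E u w → layer w = layer u + 1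
  s_ne : s1 ≠ s2
  d_ne : d1 ≠ d2
  sd_ne : ∀ s d, (s = s1 ∨ s = s2) → (d = d1 ∨ d = d2) → s ≠ d
  first_layer : ∀ v, layer v = 1 ↔ v = s1 ∨ v = s2
  last_layer : ∀ v, layer v = r ↔ v = d1 ∨ v = d2
  conn1 : Reaches E s1 d1
  conn2 : Reaches E s2 d2

/-- `InterferesOn N S Ri srcOther v` : within the induced subgraph `G[S]`, the
node `v` causes interference on the path `Ri` : `v ∈ S`, `v ∉ Ri`, there is an
edge (inside `G[S]`) from `v` into a node of `Ri`, and there is a path from the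
other source `srcOther` to `v` lying inside `G[S]` and disjoint from `Ri`. -/
def InterferesOn {V : Type*} [Fintype V] (N : TwoUnicastNetwork V) (S : Set V)
    (Ri : List V) (srcOther : V) (v : V) : Prop :=
  v ∈ S ∧ v ∉ Ri ∧ (∃ w ∈ Ri, w ∈ S ∧ N.E v w) ∧
    ∃ q, IsPath N.E q srcOther v ∧ (∀ x ∈ q, x ∈ S) ∧ ∀ x ∈ q, x ∉ Ri

/-- `n_i(G[S])` : the number of nodes causing interference on `Ri` within the
induced subgraph `G[S]`, the interfering path coming from `srcOther`. -/
noncomputable def nInterf {V : Type*} [Fintype V] (N : TwoUnicastNetwork V)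
    (S : Set V) (Ri : List V) (srcOther : V) : ℕ :=
  {v | InterferesOn N S Ri srcOther v}.ncard

/-- `n_i^D` : the number of nodes of the other path `Rother` causing (direct)
interference on `Ri` in `G`. -/
noncomputable def nDirect {V : Type*} [Fintype V] (N : TwoUnicastNetwork V)
    (Ri Rother : List V) (srcOther : V) : ℕ :=
  {v | InterferesOn N Set.univ Ri srcOther v ∧ v ∈ Rother}.ncard

/-- The pair `(R1, R2)` (paths `s1 → d1` and `s2 → d2`) has manageable
interference: there is `S ⊇ R1 ∪ R2` with `n_1(G[S]) ≠ 1` and `n_2(G[S]) ≠ 1`. -/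
def Manageable {V : Type*} [Fintype V] (N : TwoUnicastNetwork V)
    (R1 R2 : List V) : Prop :=
  ∃ S : Set V, (∀ x ∈ R1, x ∈ S) ∧ (∀ x ∈ R2, x ∈ S) ∧
    nInterf N S R1 N.s2 ≠ 1 ∧ nInterf N S R2 N.s1 ≠ 1

/-- The pair `(R1, R2)` has `(s1,d1)`-manageable interference. -/
def Manageable1 {V : Type*} [Fintype V] (N : TwoUnicastNetwork V)
    (R1 R2 : List V) : Prop :=
  ∃ S : Set V, (∀ x ∈ R1, x ∈ S) ∧ (∀ x ∈ R2, x ∈ S) ∧ nInterf N S R1 N.s2 ≠ 1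

/-- The pair `(R1, R2)` has `(s2,d2)`-manageable interference. -/
def Manageable2 {V : Type*} [Fintype V] (N : TwoUnicastNetwork V)
    (R1 R2 : List V) : Prop :=
  ∃ S : Set V, (∀ x ∈ R1, x ∈ S) ∧ (∀ x ∈ R2, x ∈ S) ∧ nInterf N S R2 N.s1 ≠ 1

/-- Removal of the vertex `v` disconnects `a` from `b` :
every path from `a` to `b` contains `v`. -/
def CutVert {V : Type*} [Fintype V] (N : TwoUnicastNetwork V) (v a b : V) : Prop :=
  ∀ p, IsPath N.E p a b → v ∈ p

/-!
Every path from `s₁` into `P₂₂` is entered through an interferer on `P₂₂`, and `v₂` is the only one,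
so every `s₁ → d₂` path contains `v₂`. Deleting `v₂` leaves no interference on `P₂₂`, so by
non-manageability `v₃` becomes the only interferer on `P₁₁`. Hence an `s₂ → d₂` path `p` avoiding
`v₂` and `v₃` is disjoint from `P₁₁`, and in the subgraph induced by `P₁₁ ∪ p` there is no
interference on `P₁₁`. Non-manageability of `(P₁₁, p)` then yields an edge from `P₁₁` into `p`, and
the resulting `s₁ → d₂` path avoids `v₂`: a contradiction.
-/

namespace IsPath

variable {V : Type*} {E : V → V → Prop} {p q r : List V} {a b c d u w x y : V}

theorem last_mem (hp : IsPath E p a b) : b ∈ p := List.mem_of_getLast? hp.2.2.1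

theorem singleton (a : V) : IsPath E [a] a a :=
  ⟨by simp, rfl, rfl, List.isChain_singleton a⟩

theorem append (hq : IsPath E q a u) (hr : IsPath E r w b) (huw : E u w) :
    IsPath E (q ++ r) a b := by
  obtain ⟨hq₀, hqa, hqu, hqE⟩ := hq
  obtain ⟨hr₀, hrw, hrb, hrE⟩ := hr
  refine ⟨by simp [hq₀], by rwa [List.head?_append_of_ne_nil _ hq₀],
    by rwa [List.getLast?_append_of_ne_nil _ hr₀], List.isChain_append.mpr ⟨hqE, hrE, ?_⟩⟩
  simp_all

theorem tail (hp : IsPath E (a :: w :: p) u b) : IsPath E (w :: p) w b ∧ E a w := by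
  obtain ⟨-, -, hb, hE⟩ := hp
  exact ⟨⟨by simp, rfl, by simpa using hb, hE.tail⟩, (List.isChain_cons_cons.mp hE).1⟩

theorem exists_prefix (hp : IsPath E p a b) (hx : x ∈ p) :
    ∃ q, IsPath E q a x ∧ q ⊆ p := by
  obtain ⟨s, t, rfl⟩ := List.mem_iff_append.mp hx
  obtain ⟨-, ha, -, hE⟩ := hp
  refine ⟨s ++ [x], ⟨by simp, ?_, by simp, hE.prefix (by simp)⟩, by simp⟩
  simpa [List.head?_append] using ha

theorem exists_suffix (hp : IsPath E p a b) (hx : x ∈ p) :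
    ∃ q, IsPath E q x b ∧ q ⊆ p := by
  obtain ⟨s, t, rfl⟩ := List.mem_iff_append.mp hx
  obtain ⟨-, -, hb, hE⟩ := hp
  refine ⟨x :: t, ⟨by simp, rfl, ?_, hE.suffix (by simp)⟩, by simp⟩
  rwa [List.getLast?_append_of_ne_nil _ (by simp)] at hb

theorem exists_of_edge (hp : IsPath E p a b) (hr : IsPath E r c d)
    (hx : x ∈ p) (hy : y ∈ r) (hxy : E x y) : ∃ q, IsPath E q a d ∧ q ⊆ p ++ r :=
  let ⟨q₁, hq₁, h₁⟩ := hp.exists_prefix hx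
  let ⟨q₂, hq₂, h₂⟩ := hr.exists_suffix hy
  ⟨q₁ ++ q₂, hq₁.append hq₂ hxy, List.append_subset.mpr
    ⟨List.Subset.trans h₁ (List.subset_append_left _ _),
      List.Subset.trans h₂ (List.subset_append_right _ _)⟩⟩

theorem exists_edge_into {T : Set V} (hp : IsPath E p a b) (ha : a ∉ T)
    (hT : ∃ y ∈ p, y ∈ T) :
    ∃ q u w, IsPath E q a u ∧ q ⊆ p ∧ (∀ y ∈ q, y ∉ T) ∧ E u w ∧ w ∈ p ∧ w ∈ T := by
  induction p generalizing a with
  | nil => exact absurd rfl hp.1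
  | cons z t ih =>
    obtain rfl : z = a := by simpa using hp.2.1
    rcases t with _ | ⟨y, t⟩
    · obtain ⟨y, hy, hyT⟩ := hT
      obtain rfl : y = z := by simpa using hy
      exact absurd hyT ha
    obtain ⟨hyt, hzy⟩ := hp.tail
    by_cases hy : y ∈ T
    · exact ⟨[z], z, y, singleton z, by simp, by simpa using ha, hzy, by simp, hy⟩
    have hT' : ∃ x ∈ y :: t, x ∈ T := by
      obtain ⟨x, hx, hxT⟩ := hT
      exact ⟨x, (List.mem_cons.mp hx).resolve_left (by rintro rfl; exact ha hxT), hxT⟩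
    obtain ⟨q, u, w, hq, hqp, hqT, huw, hwp, hwT⟩ := ih hyt hy hT'
    refine ⟨z :: q, u, w, (singleton z).append hq hzy, ?_, ?_, huw, by simp [hwp], hwT⟩
    · exact List.cons_subset_cons z hqp
    · simpa [ha] using hqT

end IsPath

namespace TwoUnicastNetwork

variable {V : Type*} [Fintype V] (N : TwoUnicastNetwork V) {p : List V} {a b x : V}

theorem eq_of_mem_of_layer_le (hp : IsPath N.E p a b) (hx : x ∈ p)
    (hle : N.layer x ≤ N.layer a) : x = a := by
  induction p generalizing a with
  | nil => exact absurd rfl hp.1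
  | cons z t ih =>
    obtain rfl : z = a := by simpa using hp.2.1
    rcases List.mem_cons.mp hx with rfl | hxt
    · rfl
    rcases t with _ | ⟨y, t⟩
    · simp at hxt
    obtain ⟨hyt, hzy⟩ := hp.tail
    have hlayer := N.edge_layer _ _ hzy
    obtain rfl := ih hyt hxt (by omega)
    omega

theorem s1_not_mem (hp : IsPath N.E p N.s2 b) : N.s1 ∉ p := fun h =>
  N.s_ne <| N.eq_of_mem_of_layer_le hp h <| by
    rw [(N.first_layer _).mpr (.inl rfl), (N.first_layer _).mpr (.inr rfl)]

theorem s2_not_mem (hp : IsPath N.E p N.s1 b) : N.s2 ∉ p := fun h =>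
  N.s_ne.symm <| N.eq_of_mem_of_layer_le hp h <| by
    rw [(N.first_layer _).mpr (.inl rfl), (N.first_layer _).mpr (.inr rfl)]

end TwoUnicastNetwork

section Interference

variable {V : Type*} [Fintype V] {N : TwoUnicastNetwork V} {S S' : Set V} {R R' R₁ R₂ p : List V}
  {src v₀ v w b : V}

theorem InterferesOn.mono (h : InterferesOn N S R src v) (hSS' : S ⊆ S') :
    InterferesOn N S' R src v := by
  obtain ⟨hv, hvR, ⟨w, hw, hwS, hvw⟩, q, hq, hqS, hqR⟩ := h
  exact ⟨hSS' hv, hvR, ⟨w, hw, hSS' hwS, hvw⟩, q, hq, fun x hx => hSS' (hqS x hx), hqR⟩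

theorem InterferesOn.of_mem_path (hR' : IsPath N.E R' src b) (hdisj : R.Disjoint R')
    (hR'S : ∀ x ∈ R', x ∈ S) (hv : v ∈ R') (hw : w ∈ R) (hwS : w ∈ S) (hvw : N.E v w) :
    InterferesOn N S R src v := by
  obtain ⟨q, hq, hqR'⟩ := hR'.exists_prefix hv
  exact ⟨hR'S v hv, fun h => hdisj h hv, ⟨w, hw, hwS, hvw⟩, q, hq,
    fun x hx => hR'S x (hqR' hx), fun x hx h => hdisj h (hqR' hx)⟩

theorem exists_interferesOn_of_isPath (hp : IsPath N.E p src b) (hsrc : src ∉ R)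
    (hR : ∃ x ∈ p, x ∈ R) (hpS : ∀ x ∈ p, x ∈ S) : ∃ u ∈ p, InterferesOn N S R src u := by
  obtain ⟨q, u, w, hq, hqp, hqR, huw, hwp, hwR⟩ := hp.exists_edge_into (T := {x | x ∈ R}) hsrc hR
  have hup := hqp hq.last_mem
  exact ⟨u, hup, hpS u hup, hqR u hq.last_mem, ⟨w, hwR, hpS w hwp, huw⟩, q, hq,
    fun x hx => hpS x (hqp hx), hqR⟩

theorem mem_of_isPath_of_interferers_subset (hI : {v | InterferesOn N S R src v} ⊆ {v₀})
    (hp : IsPath N.E p src b) (hsrc : src ∉ R) (hR : ∃ x ∈ p, x ∈ R)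
    (hpS : ∀ x ∈ p, x ∈ S) : v₀ ∈ p := by
  obtain ⟨u, hup, hu⟩ := exists_interferesOn_of_isPath hp hsrc hR hpS
  rwa [← Set.mem_singleton_iff.mp (hI hu)]

theorem nInterf_eq_zero_of_interferers_subset (hI : {v | InterferesOn N S' R src v} ⊆ {v₀})
    (hSS' : S ⊆ S') (hv₀ : v₀ ∉ S) : nInterf N S R src = 0 := by
  rw [nInterf, Set.ncard_eq_zero, Set.eq_empty_iff_forall_notMem]
  intro v hv
  obtain rfl : v = v₀ := hI (InterferesOn.mono hv hSS')
  exact hv₀ hv.1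

theorem interferers_subset_singleton (h : nInterf N S R src = 1)
    (hv₀ : InterferesOn N S R src v₀) : {v | InterferesOn N S R src v} ⊆ {v₀} := by
  obtain ⟨a, ha⟩ := Set.ncard_eq_one.mp h
  rw [ha, Set.singleton_subset_iff, Set.mem_singleton_iff.mp (ha ▸ hv₀ : v₀ ∈ ({a} : Set V))]
  rfl

theorem exists_interferesOn_of_nInterf_eq_one (h : nInterf N S R src = 1) :
    ∃ v, InterferesOn N S R src v :=
  let ⟨a, ha⟩ := Set.ncard_eq_one.mp h
  ⟨a, ha.ge rfl⟩

theorem not_mem_of_nDirect_eq_zero (h : nDirect N R R' src = 0)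
    (hv : InterferesOn N Set.univ R src v) : v ∉ R' := by
  rw [nDirect, Set.ncard_eq_zero, Set.eq_empty_iff_forall_notMem] at h
  exact fun hv' => h v ⟨hv, hv'⟩

theorem nInterf_fst_eq_one_of_not_manageable (h : ¬Manageable N R₁ R₂)
    (h₁ : ∀ x ∈ R₁, x ∈ S) (h₂ : ∀ x ∈ R₂, x ∈ S) (h₀ : nInterf N S R₂ N.s1 = 0) :
    nInterf N S R₁ N.s2 = 1 := by
  by_contra hne
  exact h ⟨S, h₁, h₂, hne, by omega⟩

theorem nInterf_snd_eq_one_of_not_manageable (h : ¬Manageable N R₁ R₂)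
    (h₁ : ∀ x ∈ R₁, x ∈ S) (h₂ : ∀ x ∈ R₂, x ∈ S) (h₀ : nInterf N S R₁ N.s2 = 0) :
    nInterf N S R₂ N.s1 = 1 := by
  by_contra hne
  exact h ⟨S, h₁, h₂, by omega, hne⟩

end Interference

theorem mem_or_mem_of_isPath_s2_d2 {V : Type*} [Fintype V] {N : TwoUnicastNetwork V}
    {P11 p : List V} {v2 v3 : V}
    (hNoMan : ∀ R2 : List V, IsPath N.E R2 N.s2 N.d2 → P11.Disjoint R2 → ¬Manageable N P11 R2)
    (hP11 : IsPath N.E P11 N.s1 N.d1) (hv2P11 : v2 ∉ P11) (hv3P11 : v3 ∉ P11)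
    (hs1 : ∀ q : List V, IsPath N.E q N.s1 N.d2 → v2 ∈ q)
    (hI : {v | InterferesOn N {v2}ᶜ P11 N.s2 v} ⊆ {v3})
    (hp : IsPath N.E p N.s2 N.d2) : v2 ∈ p ∨ v3 ∈ p := by
  by_contra! ⟨hpv2, hpv3⟩
  have hpv2' : ∀ x ∈ p, x ∈ ({v2}ᶜ : Set V) := fun x hx (h : x = v2) => hpv2 (h ▸ hx)
  have hdisj : P11.Disjoint p := fun x hx hxp => hpv3 <|
    mem_of_isPath_of_interferers_subset hI hp (N.s2_not_mem hP11) ⟨x, hxp, hx⟩ hpv2'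
  set S : Set V := {x | x ∈ P11 ∨ x ∈ p}
  have hS : S ⊆ {v2}ᶜ := by
    rintro x (hx | hx) rfl
    exacts [hv2P11 hx, hpv2 hx]
  have hv3S : v3 ∉ S := by
    rintro (hv3 | hv3)
    exacts [hv3P11 hv3, hpv3 hv3]
  obtain ⟨a, haS, hap, ⟨w, hwp, -, haw⟩, -⟩ :=
    exists_interferesOn_of_nInterf_eq_one <| nInterf_snd_eq_one_of_not_manageable
      (hNoMan p hp hdisj) (fun _ => .inl) (fun _ => .inr)
      (nInterf_eq_zero_of_interferers_subset hI hS hv3S)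
  obtain ⟨q, hq, hqs⟩ := hP11.exists_of_edge hp (haS.resolve_right hap) hwp haw
  rcases List.mem_append.mp (hqs (hs1 q hq)) with h | h
  exacts [hv2P11 h, hpv2 h]

theorem statement7_general {V : Type*} [Fintype V]
    (N : TwoUnicastNetwork V)
    (P11 P22 : List V)
    (v2 v3 : V)
    (hP11 : IsPath N.E P11 N.s1 N.d1)
    (hP22 : IsPath N.E P22 N.s2 N.d2)
    (hdisj : P11.Disjoint P22)
    (hNoMan : ∀ R1 R2 : List V, IsPath N.E R1 N.s1 N.d1 → IsPath N.E R2 N.s2 N.d2 →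
      R1.Disjoint R2 → ¬ Manageable N R1 R2)
    (hn2D : nDirect N P22 P11 N.s1 = 0)
    (hv3unique : {v | InterferesOn N Set.univ P11 N.s2 v ∧ v ∈ P22} = {v3})
    (hv2unique : {v | InterferesOn N Set.univ P22 N.s1 v} = {v2}) :
    (∀ p : List V, IsPath N.E p N.s1 N.d2 → v2 ∈ p ∨ v3 ∈ p) ∧
    (∀ p : List V, IsPath N.E p N.s2 N.d2 → v2 ∈ p ∨ v3 ∈ p) := by
  obtain ⟨hv3, hv3P22⟩ : InterferesOn N Set.univ P11 N.s2 v3 ∧ v3 ∈ P22 := hv3unique.ge rfl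
  have hv2 : InterferesOn N Set.univ P22 N.s1 v2 := hv2unique.ge rfl
  have hv2P11 : v2 ∉ P11 := not_mem_of_nDirect_eq_zero hn2D hv2
  have hs1 : ∀ p : List V, IsPath N.E p N.s1 N.d2 → v2 ∈ p := fun p hp =>
    mem_of_isPath_of_interferers_subset hv2unique.le hp (N.s1_not_mem hP22)
      ⟨N.d2, hp.last_mem, hP22.last_mem⟩ fun _ _ => trivial
  have hI : {v | InterferesOn N {v2}ᶜ P11 N.s2 v} ⊆ {v3} := by
    have hP22S : ∀ x ∈ P22, x ∈ ({v2}ᶜ : Set V) := fun x hx (h : x = v2) => hv2.2.1 (h ▸ hx)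
    have hP11S : ∀ x ∈ P11, x ∈ ({v2}ᶜ : Set V) := fun x hx (h : x = v2) => hv2P11 (h ▸ hx)
    obtain ⟨w, hw, -, hv3w⟩ := hv3.2.2.1
    refine interferers_subset_singleton (nInterf_fst_eq_one_of_not_manageable
      (hNoMan _ _ hP11 hP22 hdisj) hP11S hP22S ?_)
      (.of_mem_path hP22 hdisj hP22S hv3P22 hw (hP11S w hw) hv3w)
    exact nInterf_eq_zero_of_interferers_subset hv2unique.le (Set.subset_univ _) (by simp)
  exact ⟨fun p hp => .inl (hs1 p hp), fun p => mem_or_mem_of_isPath_s2_d2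
    (hNoMan P11 · hP11) hP11 hv2P11 hv3.2.1 hs1 hI⟩

theorem statement7 {V : Type*} [Fintype V] [DecidableEq V]
    (N : TwoUnicastNetwork V)
    (P11 P22 Ps2v1 Pvmv1 Ps1v2 : List V)
    (v0 v1 v2 v3 v4 v5 v6 vm : V)
    (hP11 : IsPath N.E P11 N.s1 N.d1)
    (hP22 : IsPath N.E P22 N.s2 N.d2)
    (hdisj : P11.Disjoint P22)
    (hNoMan : ∀ R1 R2 : List V, IsPath N.E R1 N.s1 N.d1 → IsPath N.E R2 N.s2 N.d2 →
      R1.Disjoint R2 → ¬ Manageable N R1 R2)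
    (hn1 : 2 ≤ nInterf N Set.univ P11 N.s2)
    (hn1D : nDirect N P11 P22 N.s2 = 1)
    (hn2 : nInterf N Set.univ P22 N.s1 = 1)
    (hn2D : nDirect N P22 P11 N.s1 = 0)
    (hv3P22 : v3 ∈ P22)
    (hv3unique : {v | InterferesOn N Set.univ P11 N.s2 v ∧ v ∈ P22} = {v3})
    (hv4P11 : v4 ∈ P11)
    (hv3v4 : N.E v3 v4)
    (hv3v4unique : ∀ w ∈ P11, N.E v3 w → w = v4)
    (hv1P11 : v1 ∉ P11)
    (hv1P22 : v1 ∉ P22)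
    (hv1int : InterferesOn N Set.univ P11 N.s2 v1)
    (hPs2v1 : IsPath N.E Ps2v1 N.s2 v1)
    (hPs2v1disj : Ps2v1.Disjoint P11)
    (hvmP22 : vm ∈ P22)
    (hvmPs2v1 : vm ∈ Ps2v1)
    (hvmlast : ∀ x ∈ Ps2v1, x ∈ P22 → Ps2v1.idxOf x ≤ Ps2v1.idxOf vm)
    (hPvmv1 : IsPath N.E Pvmv1 vm v1)
    (hPvmv1suffix : Pvmv1 <:+ Ps2v1)
    (hv2Pvmv1 : v2 ∈ Pvmv1)
    (hv2ne : v2 ≠ vm)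
    (hv2unique : {v | InterferesOn N Set.univ P22 N.s1 v} = {v2})
    (hv0P22 : v0 ∈ P22)
    (hv2v0 : N.E v2 v0)
    (hv2v0unique : ∀ w ∈ P22, N.E v2 w → w = v0)
    (hPs1v2 : IsPath N.E Ps1v2 N.s1 v2)
    (hPs1v2sub : ∀ x ∈ Ps1v2, x ∈ P11 ∨ x ∈ P22 ∨ x ∈ Pvmv1)
    (hv5P11 : v5 ∈ P11)
    (hv5mem : v5 ∈ Ps1v2)
    (hv5last : ∀ x ∈ Ps1v2, x ∈ P11 → Ps1v2.idxOf x ≤ Ps1v2.idxOf v5)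
    (hv6succ : ∃ k : ℕ, Ps1v2[k]? = some v5 ∧ Ps1v2[k+1]? = some v6) :
    (∀ p : List V, IsPath N.E p N.s1 N.d2 → v2 ∈ p ∨ v3 ∈ p) ∧
    (∀ p : List V, IsPath N.E p N.s2 N.d2 → v2 ∈ p ∨ v3 ∈ p) :=
  statement7_general N P11 P22 v2 v3 hP11 hP22 hdisj hNoMan hn2D hv3unique hv2unique
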